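/- Let O be a discrete valuation ring with uniformizer π and fraction field K. Let T be a free O-module of finite rank with a continuous action of a profinite group G, let V = T ⊗ K and A = V/T. If dim_K V^G = dim_k (A[π])^G (where k = O/π), then A^G is a divisible O-module. -/

import Mathlib

/-!
Let `W = V^G` and let `D ⊆ A^G` be the image of `W` in `A = V/T`; it is divisible, being the
image of a `K`-vector space. If `b` is an `O`-basis of the lattice `W ∩ T`, the classes of
`π⁻¹ bᵢ` are `k`-linearly independent in `(A^G)[π]`, and there are `rank (W ∩ T) ≥ dim_K W`
of them. The hypothesis `dim_K W = dim_k (A^G)[π]` therefore forces them to span `(A^G)[π]`, so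
`(A^G)[π] ⊆ D`. Since `A` is `π`-power torsion and `D` is `π`-divisible, induction on the
exponent gives `A^G ⊆ D`, hence `A^G = D` is divisible.
-/

/-- The fixed points of a family of endomorphisms (e.g. an induced group action). -/
def fixedSubmodule {R M G : Type*} [CommRing R] [AddCommGroup M] [Module R M]
    (σ : G → M →ₗ[R] M) : Submodule R M where
  carrier := {m | ∀ g : G, σ g m = m}
  add_mem' := by intro a b ha hb g; rw [map_add, ha g, hb g]
  zero_mem' := by intro g; simp
  smul_mem' := by intro c a ha g; rw [map_smul, ha g]

/-- The action induced on the torsion quotient A = V/T by a G-action on V stabilizing the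
lattice T. -/
def quotAct {O K V G : Type*} [CommRing O] [Field K] [Algebra O K]
    [AddCommGroup V] [Module O V] [Module K V] [IsScalarTower O K V] [Group G]
    (ρ : Representation K G V) (T : Submodule O V)
    (hstab : ∀ g : G, T ≤ T.comap ((ρ g).restrictScalars O)) (g : G) :
    (V ⧸ T) →ₗ[O] (V ⧸ T) :=
  Submodule.mapQ T T ((ρ g).restrictScalars O) (hstab g)

theorem Submodule.le_of_inf_torsionBy_le {R M : Type*} [CommRing R] [AddCommGroup M] [Module R M]
    {π : R} {D F : Submodule R M} (hDF : D ≤ F) (hdiv : ∀ d ∈ D, ∃ e ∈ D, π • e = d)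
    (htors : Module.IsTorsion' M (Submonoid.powers π)) (h : F ⊓ torsionBy R M π ≤ D) :
    F ≤ D := by
  suffices ∀ n : ℕ, ∀ a ∈ F, π ^ n • a = 0 → a ∈ D by
    intro a ha
    obtain ⟨⟨_, n, rfl⟩, hn⟩ := @htors a
    exact this n a ha hn
  intro n
  induction n with
  | zero => intro a _ ha; simp_all
  | succ n ih =>
    intro a ha han
    obtain ⟨d, hd, hπd⟩ :=
      hdiv _ (ih (π • a) (F.smul_mem π ha) (by rwa [smul_smul, ← pow_succ]))
    have had : a - d ∈ F ⊓ torsionBy R M π :=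
      ⟨F.sub_mem ha (hDF hd), by
        rw [SetLike.mem_coe, mem_torsionBy_iff, smul_sub, hπd, sub_self]⟩
    simpa using D.add_mem (h had) hd

theorem Submodule.finite_torsionBy_submodule {R M : Type*} [CommRing R]
    [IsNoetherianRing R] [AddCommGroup M] [Module R M] {a : R}
    [Module.Finite R (torsionBy R M a)] (N : Submodule R M) :
    Module.Finite (R ⧸ Ideal.span {a}) (torsionBy R N a) := by
  have : Module.Finite R (torsionBy R N a) := by
    refine Module.Finite.of_injective (N.subtype.restrict (p := torsionBy R N a)
      (q := torsionBy R M a) fun x hx => ?_) fun x y hxy => ?_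
    · rw [mem_torsionBy_iff] at hx ⊢
      rw [← map_smul, hx, map_zero]
    · exact Subtype.ext (Subtype.ext (congrArg (fun z : torsionBy R M a => (z : M)) hxy))
  exact Module.Finite.of_restrictScalars_finite R _ _

theorem Submodule.torsionBy_le_span_of_finrank_le {R M ι : Type*} [CommRing R] [AddCommGroup M]
    [Module R M] [Fintype ι] {a : R} [(Ideal.span {a}).IsMaximal]
    [Module.Finite (R ⧸ Ideal.span {a}) (torsionBy R M a)] {y : ι → M} (hy : ∀ i, a • y i = 0)
    (hindep : ∀ c : ι → R, ∑ i, c i • y i = 0 → ∀ i, a ∣ c i)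
    (hcard : Module.finrank (R ⧸ Ideal.span {a}) (torsionBy R M a) ≤ Fintype.card ι) :
    torsionBy R M a ≤ span R (Set.range y) := by
  let _ := Ideal.Quotient.field (Ideal.span {a})
  let z : ι → torsionBy R M a := fun i => ⟨y i, hy i⟩
  have hlift : Function.Surjective fun (c : ι → R) i => Ideal.Quotient.mk (Ideal.span {a}) (c i) :=
    Ideal.Quotient.mk_surjective.comp_left
  have hsum : ∀ c : ι → R,
      ((∑ i, Ideal.Quotient.mk (Ideal.span {a}) (c i) • z i : torsionBy R M a) : M) =
        ∑ i, c i • y i := by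
    intro c
    simp [z]
  have hli : LinearIndependent (R ⧸ Ideal.span {a}) z := by
    refine Fintype.linearIndependent_iff.mpr fun g hg i => ?_
    obtain ⟨c, rfl⟩ := hlift g
    have := hindep c (by rw [← hsum, hg, ZeroMemClass.coe_zero]) i
    exact Ideal.Quotient.eq_zero_iff_mem.mpr (Ideal.mem_span_singleton.mpr this)
  have hz : span (R ⧸ Ideal.span {a}) (Set.range z) = ⊤ :=
    hli.span_eq_top_of_card_eq_finrank' (le_antisymm hli.fintype_card_le_finrank hcard)
  intro x hx
  have hx' : (⟨x, hx⟩ : torsionBy R M a) ∈ span (R ⧸ Ideal.span {a}) (Set.range z) :=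
    hz ▸ mem_top
  obtain ⟨g, hg⟩ := (mem_span_range_iff_exists_fun _).mp hx'
  obtain ⟨c, rfl⟩ := hlift g
  exact (mem_span_range_iff_exists_fun _).mpr ⟨c, by rw [← hsum, hg]⟩

section Lattice

variable {O K V : Type*} [CommRing O] [Field K] [Algebra O K]
  [AddCommGroup V] [Module O V] [Module K V] [IsScalarTower O K V]

theorem smul_inv_algebraMap_smul {c : O} (hc : algebraMap O K c ≠ 0) (v : V) :
    c • (algebraMap O K c)⁻¹ • v = v := by
  rw [← smul_assoc, Algebra.smul_def, mul_inv_cancel₀ hc, one_smul]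

theorem exists_smul_eq_of_mem_map_mkQ (W : Submodule K V) (T : Submodule O V) {c : O}
    (hc : algebraMap O K c ≠ 0) {a : V ⧸ T} (ha : a ∈ (W.restrictScalars O).map T.mkQ) :
    ∃ b ∈ (W.restrictScalars O).map T.mkQ, c • b = a := by
  obtain ⟨v, hv, rfl⟩ := ha
  exact ⟨T.mkQ ((algebraMap O K c)⁻¹ • v), Submodule.mem_map_of_mem (W.smul_mem _ hv),
    by rw [← map_smul, smul_inv_algebraMap_smul hc]⟩

theorem finite_torsionBy_quotient (T : Submodule O V) [Module.Finite O T] {π : O}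
    (hπ : algebraMap O K π ≠ 0) : Module.Finite O (Submodule.torsionBy O (V ⧸ T) π) := by
  let f : T →ₗ[O] V ⧸ T :=
    T.mkQ ∘ₗ ((algebraMap O K π)⁻¹ • LinearMap.id : V →ₗ[K] V).restrictScalars O ∘ₗ T.subtype
  have hf : LinearMap.range f = Submodule.torsionBy O (V ⧸ T) π := by
    ext a
    rw [Submodule.mem_torsionBy_iff]
    constructor
    · rintro ⟨t, rfl⟩
      change π • T.mkQ ((algebraMap O K π)⁻¹ • (t : V)) = 0
      rw [← map_smul, smul_inv_algebraMap_smul hπ, Submodule.mkQ_apply,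
        Submodule.Quotient.mk_eq_zero]
      exact t.2
    · obtain ⟨v, rfl⟩ := T.mkQ_surjective a
      intro hv
      rw [← map_smul, Submodule.mkQ_apply, Submodule.Quotient.mk_eq_zero] at hv
      refine ⟨⟨π • v, hv⟩, ?_⟩
      change T.mkQ ((algebraMap O K π)⁻¹ • π • v) = T.mkQ v
      rw [smul_comm, smul_inv_algebraMap_smul hπ]
  rw [← hf]
  infer_instance

theorem finrank_span_le_finrank [Nontrivial O] (S : Submodule O V) [Module.Free O S]
    [Module.Finite O S] : Module.finrank K (Submodule.span K (S : Set V)) ≤ Module.finrank O S := by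
  let b := Module.finBasis O S
  have hS : Submodule.span O (Set.range fun i => (b i : V)) = S := by
    rw [Set.range_comp' (g := Subtype.val), ← Submodule.coe_subtype, ← Submodule.map_span,
      b.span_eq, Submodule.map_subtype_top]
  have := finrank_range_le_card (R := K) fun i => (b i : V)
  rwa [Set.finrank, ← Submodule.span_span_of_tower O, hS, Fintype.card_fin] at this

theorem dvd_of_inv_smul_sum_mem (W : Submodule K V) (T : Submodule O V) {π : O}
    (hπ : algebraMap O K π ≠ 0) {ι : Type*} [Fintype ι]
    (b : Module.Basis ι O ↥(W.restrictScalars O ⊓ T)) {c : ι → O}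
    (h : (algebraMap O K π)⁻¹ • ∑ i, c i • (b i : V) ∈ T) (i : ι) : π ∣ c i := by
  set s := (algebraMap O K π)⁻¹ • ∑ i, c i • (b i : V)
  have hsW : s ∈ W.restrictScalars O :=
    W.smul_mem _ (Submodule.sum_mem _ fun j _ => (W.restrictScalars O).smul_mem _ (b j).2.1)
  have hπs : π • (⟨s, hsW, h⟩ : ↥(W.restrictScalars O ⊓ T)) = ∑ j, c j • b j := by
    ext
    simp [s, smul_inv_algebraMap_smul hπ]
  have hrepr := congrArg (fun z => b.repr z i) hπs
  simp only [map_smul, Finsupp.smul_apply, smul_eq_mul, Module.Basis.repr_sum_self] at hrepr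
  exact ⟨_, hrepr.symm⟩

variable [IsDomain O] [IsFractionRing O K]

theorem exists_smul_mem_of_mem_span (T : Submodule O V) {v : V}
    (hv : v ∈ Submodule.span K (T : Set V)) : ∃ c : O, c ≠ 0 ∧ c • v ∈ T := by
  induction hv using Submodule.span_induction with
  | mem x hx => exact ⟨1, one_ne_zero, by simpa using hx⟩
  | zero => exact ⟨1, one_ne_zero, by simp⟩
  | add x y _ _ ihx ihy =>
    obtain ⟨c, hc, hcx⟩ := ihx
    obtain ⟨d, hd, hdy⟩ := ihy
    refine ⟨d * c, mul_ne_zero hd hc, ?_⟩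
    rw [smul_add, mul_smul, mul_comm, mul_smul]
    exact T.add_mem (T.smul_mem d hcx) (T.smul_mem c hdy)
  | smul a x _ ih =>
    obtain ⟨c, hc, hcx⟩ := ih
    obtain ⟨p, q, hq, rfl⟩ := IsFractionRing.div_surjective (A := O) a
    have hq0 : algebraMap O K q ≠ 0 :=
      IsFractionRing.to_map_ne_zero_of_mem_nonZeroDivisors hq
    refine ⟨q * c, mul_ne_zero (nonZeroDivisors.ne_zero hq) hc, ?_⟩
    have : q • (algebraMap O K p / algebraMap O K q) = algebraMap O K p := by
      rw [Algebra.smul_def, mul_div_cancel₀ _ hq0]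
    rw [mul_comm, mul_smul, ← smul_assoc q, this, algebraMap_smul, smul_comm]
    exact T.smul_mem p hcx

theorem span_restrictScalars_inf_eq (W : Submodule K V) (T : Submodule O V)
    (hspan : Submodule.span K (T : Set V) = ⊤) :
    Submodule.span K ((W.restrictScalars O ⊓ T : Submodule O V) : Set V) = W := by
  refine le_antisymm (Submodule.span_le.mpr fun v hv => hv.1) fun v hv => ?_
  obtain ⟨c, hc, hcv⟩ := exists_smul_mem_of_mem_span T (hspan ▸ Submodule.mem_top (x := v))
  have hc' : algebraMap O K c ≠ 0 := (map_ne_zero_iff _ (IsFractionRing.injective O K)).mpr hc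
  rw [← smul_inv_algebraMap_smul hc' v, ← smul_comm]
  exact Submodule.smul_mem _ _
    (Submodule.subset_span ⟨(W.restrictScalars O).smul_mem c hv, hcv⟩)

theorem finrank_le_finrank_restrictScalars_inf (W : Submodule K V) (T : Submodule O V)
    (hspan : Submodule.span K (T : Set V) = ⊤) [Module.Free O ↥(W.restrictScalars O ⊓ T)]
    [Module.Finite O ↥(W.restrictScalars O ⊓ T)] :
    Module.finrank K W ≤ Module.finrank O ↥(W.restrictScalars O ⊓ T) := by
  have := finrank_span_le_finrank (K := K) (W.restrictScalars O ⊓ T)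
  rwa [span_restrictScalars_inf_eq W T hspan] at this

theorem isTorsion'_powers_quotient [IsDiscreteValuationRing O] {π : O} (hπ : Irreducible π)
    (T : Submodule O V) (hspan : Submodule.span K (T : Set V) = ⊤) :
    Module.IsTorsion' (V ⧸ T) (Submonoid.powers π) := by
  intro a
  obtain ⟨v, rfl⟩ := T.mkQ_surjective a
  obtain ⟨c, hc, hcv⟩ := exists_smul_mem_of_mem_span T (hspan ▸ Submodule.mem_top (x := v))
  obtain ⟨n, u, rfl⟩ := IsDiscreteValuationRing.eq_unit_mul_pow_irreducible hc hπ
  refine ⟨⟨π ^ n, pow_mem (Submonoid.mem_powers π) n⟩, u.isUnit.smul_eq_zero.mp ?_⟩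
  rwa [Submonoid.smul_def, smul_smul, ← map_smul, Submodule.mkQ_apply,
    Submodule.Quotient.mk_eq_zero]

theorem inf_torsionBy_le_map_mkQ [IsPrincipalIdealRing O] (W : Submodule K V)
    (T : Submodule O V) [Module.Free O T] [Module.Finite O T]
    (hspan : Submodule.span K (T : Set V) = ⊤) {π : O} (hπ : algebraMap O K π ≠ 0)
    [(Ideal.span {π}).IsMaximal] {F : Submodule O (V ⧸ T)}
    (hWF : (W.restrictScalars O).map T.mkQ ≤ F)
    (hdim : Module.finrank (O ⧸ Ideal.span {π}) (Submodule.torsionBy O F π) ≤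
      Module.finrank K W) :
    F ⊓ Submodule.torsionBy O (V ⧸ T) π ≤ (W.restrictScalars O).map T.mkQ := by
  set S := W.restrictScalars O ⊓ T
  have : Module.Finite O S :=
    Module.Finite.of_injective (Submodule.inclusion inf_le_right) (Submodule.inclusion_injective _)
  have : Module.Free O S := Module.Free.of_equiv (Submodule.comapSubtypeEquivOfLe inf_le_right)
  have := finite_torsionBy_quotient T hπ
  have := Submodule.finite_torsionBy_submodule (a := π) F
  let b := Module.finBasis O S
  have hyD : ∀ i, T.mkQ ((algebraMap O K π)⁻¹ • (b i : V)) ∈ (W.restrictScalars O).map T.mkQ :=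
    fun i => Submodule.mem_map_of_mem (W.smul_mem _ (b i).2.1)
  let y : Fin (Module.finrank O S) → F := fun i => ⟨_, hWF (hyD i)⟩
  have hy : ∀ i, π • y i = 0 := fun i => by
    ext
    change π • T.mkQ _ = 0
    rw [← map_smul, smul_inv_algebraMap_smul hπ, Submodule.mkQ_apply,
      Submodule.Quotient.mk_eq_zero]
    exact (b i).2.2
  have hindep : ∀ c : Fin _ → O, ∑ i, c i • y i = 0 → ∀ i, π ∣ c i := by
    intro c hc
    refine dvd_of_inv_smul_sum_mem W T hπ b ?_
    rw [← Submodule.Quotient.mk_eq_zero, ← Submodule.mkQ_apply, Finset.smul_sum, map_sum]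
    have hval := congrArg Subtype.val hc
    rw [Submodule.coe_sum, ZeroMemClass.coe_zero] at hval
    convert hval using 2 with i
    rw [smul_comm, map_smul]
    rfl
  have hcard : Module.finrank (O ⧸ Ideal.span {π}) (Submodule.torsionBy O F π) ≤
      Fintype.card (Fin (Module.finrank O S)) := by
    rw [Fintype.card_fin]
    exact hdim.trans (finrank_le_finrank_restrictScalars_inf W T hspan)
  have hspanD :
      Submodule.span O (Set.range y) ≤ ((W.restrictScalars O).map T.mkQ).comap F.subtype :=
    Submodule.span_le.mpr (Set.range_subset_iff.mpr hyD)
  rintro x ⟨hxF, hxπ⟩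
  have hx : (⟨x, hxF⟩ : F) ∈ Submodule.torsionBy O F π := Subtype.ext hxπ
  exact hspanD (Submodule.torsionBy_le_span_of_finrank_le hy hindep hcard hx)

end Lattice

theorem map_mkQ_invariants_le_fixedSubmodule {O K V G : Type*} [CommRing O] [Field K]
    [Algebra O K] [AddCommGroup V] [Module O V] [Module K V] [IsScalarTower O K V] [Group G]
    (ρ : Representation K G V) (T : Submodule O V)
    (hstab : ∀ g : G, T ≤ T.comap ((ρ g).restrictScalars O)) :
    (ρ.invariants.restrictScalars O).map T.mkQ ≤ fixedSubmodule (quotAct ρ T hstab) := by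
  rintro _ ⟨v, hv, rfl⟩ g
  simp only [quotAct, Submodule.mkQ_apply, Submodule.mapQ_apply, LinearMap.restrictScalars_apply]
  rw [(ρ.mem_invariants v).mp hv g]

theorem stmt_0 {O : Type*} [CommRing O] [IsDomain O] [IsDiscreteValuationRing O]
    {π : O} (hπ : Irreducible π)
    {K : Type*} [Field K] [Algebra O K] [IsFractionRing O K]
    {G : Type*} [Group G]
    {V : Type*} [AddCommGroup V] [Module O V] [Module K V] [IsScalarTower O K V]
    (ρ : Representation K G V)
    (T : Submodule O V) [Module.Free O T] [Module.Finite O T]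
    (hspan : Submodule.span K (T : Set V) = ⊤)
    (hstab : ∀ g : G, T ≤ T.comap ((ρ g).restrictScalars O))
    (hdim : Module.finrank K ρ.invariants =
      Module.finrank (O ⧸ Ideal.span {π})
        (Submodule.torsionBy O (fixedSubmodule (quotAct ρ T hstab)) π)) :
    ∀ a ∈ fixedSubmodule (quotAct ρ T hstab), ∀ c : O, c ≠ 0 →
      ∃ b ∈ fixedSubmodule (quotAct ρ T hstab), c • b = a := by
  have halg : ∀ {c : O}, c ≠ 0 → algebraMap O K c ≠ 0 :=
    (map_ne_zero_iff _ (IsFractionRing.injective O K)).mpr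
  have := PrincipalIdealRing.isMaximal_of_irreducible hπ
  have hDF := map_mkQ_invariants_le_fixedSubmodule ρ T hstab
  have hFD : fixedSubmodule (quotAct ρ T hstab) ≤ (ρ.invariants.restrictScalars O).map T.mkQ :=
    Submodule.le_of_inf_torsionBy_le hDF
      (fun _ hd => exists_smul_eq_of_mem_map_mkQ _ T (halg hπ.ne_zero) hd)
      (isTorsion'_powers_quotient hπ T hspan)
      (inf_torsionBy_le_map_mkQ _ T hspan (halg hπ.ne_zero) hDF hdim.ge)
  intro a ha c hc
  obtain ⟨b, hb, hcb⟩ := exists_smul_eq_of_mem_map_mkQ _ T (halg hc) (hFD ha)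
  exact ⟨b, hDF hb, hcb⟩
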